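/- Let (H,R) be a quasitriangular Hopf algebra, X and Y Yetter–Drinfeld modules over H. On the cotensor product X □_{₍R₎H} Y (inside X⊗Y), the map λ(Σ xᵢ⊗yᵢ) = Σ (xᵢ)₍₋₁₎R² ⊗ (xᵢ)₍₀₎ ⊗ R¹·yᵢ together with the diagonal H-action h·(Σ xᵢ⊗yᵢ) = Σ h₁·xᵢ ⊗ h₂·yᵢ defines a left-left Yetter–Drinfeld module structure on X □_{₍R₎H} Y. -/

import Mathlib

/-!
`condL` is the tensor product coaction `x ⊗ y ↦ x₍₋₁₎y₍₋₁₎ ⊗ x₍₀₎ ⊗ y₍₀₎` of `λ_X` with the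
coaction `y ↦ R² ⊗ R¹·y` that the R-matrix puts on every `H`-module, and `condR` is the tensor
product of `x ↦ S(R¹) ⊗ R²·x` (built from `R⁻¹ = (S ⊗ id) R`) with `λ_Y`. By (QT4) both twisted
coactions satisfy the Yetter–Drinfeld condition, and the Yetter–Drinfeld condition passes to
tensor products; so `condL` and `condR` are both Yetter–Drinfeld coactions for the diagonal action
on all of `X ⊗ Y`, and `condL` is counital and coassociative by (QT1) and (QT3). In a
Yetter–Drinfeld module `λ(h·m) = h₁m₍₋₁₎S(h₃) ⊗ h₂m₍₀₎` depends only on `λ(m)`, so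
`condL w = condR w` propagates from `w` to `h·w`.
-/

open TensorProduct

noncomputable section

/-- Scalar multiplication by a fixed `h : H` as a `k`-linear map. -/
def smulL (k : Type) {H M : Type} [CommRing k] [Ring H] [AddCommGroup M]
    [Module k M] [Module H M] [SMulCommClass H k M] (h : H) : M →ₗ[k] M where
  toFun m := h • m
  map_add' := smul_add h
  map_smul' c m := smul_comm h c m

/-- The module action `H ⊗ M → M` as a linear map. -/
def actT (k H M : Type) [CommRing k] [Ring H] [Algebra k H] [AddCommGroup M]
    [Module k M] [Module H M] [IsScalarTower k H M] [SMulCommClass H k M] :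
    H ⊗[k] M →ₗ[k] M :=
  TensorProduct.lift
    { toFun := fun h => smulL k h
      map_add' := fun h h' => LinearMap.ext fun m => add_smul h h' m
      map_smul' := fun c h => LinearMap.ext fun m => smul_assoc c h m }

/-- Quasitriangular structure, with the R-matrix given by a finite family
`R = ∑ i, R1 i ⊗ R2 i`, satisfying (QT1)-(QT4) and invertibility. -/
structure QT (k H : Type) [CommRing k] [Ring H] [HopfAlgebra k H]
    {ι : Type} [Fintype ι] (R1 R2 : ι → H) : Prop where
  qt1a : ∑ i, Coalgebra.counit (R := k) (R1 i) • R2 i = (1 : H)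
  qt1b : ∑ i, Coalgebra.counit (R := k) (R2 i) • R1 i = (1 : H)
  qt2 : ∑ i, Coalgebra.comul (R := k) (R1 i) ⊗ₜ[k] R2 i
      = ∑ i, ∑ j, (R1 i ⊗ₜ[k] R1 j) ⊗ₜ[k] (R2 i * R2 j)
  qt3 : ∑ i, R1 i ⊗ₜ[k] Coalgebra.comul (R := k) (R2 i)
      = ∑ i, ∑ j, (R1 i * R1 j) ⊗ₜ[k] (R2 j ⊗ₜ[k] R2 i)
  qt4 : ∀ h : H, (∑ i, R1 i ⊗ₜ[k] R2 i) * Coalgebra.comul (R := k) h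
      = TensorProduct.comm k H H (Coalgebra.comul (R := k) h) * (∑ i, R1 i ⊗ₜ[k] R2 i)
  isUnit : IsUnit (∑ i, R1 i ⊗ₜ[k] R2 i)

/-- The left adjoint action `h ⊗ x ↦ h₁ x S(h₂)` as a linear map. -/
def adjT (k H : Type) [CommRing k] [Ring H] [HopfAlgebra k H] : H ⊗[k] H →ₗ[k] H :=
  (LinearMap.mul' k H) ∘ₗ
    (LinearMap.lTensor H (LinearMap.mul' k H)) ∘ₗ
    (LinearMap.lTensor H ((TensorProduct.map (LinearMap.id : H →ₗ[k] H)
        (HopfAlgebra.antipode (R := k))) ∘ₗ (TensorProduct.comm k H H).toLinearMap)) ∘ₗ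
    (TensorProduct.assoc k H H H).toLinearMap ∘ₗ
    (LinearMap.rTensor H (Coalgebra.comul (R := k)))

/-- The diagonal action of `H` on `M ⊗ N`, `h ⊗ (m ⊗ n) ↦ h₁·m ⊗ h₂·n`. -/
def actD (k H M N : Type) [CommRing k] [Ring H] [HopfAlgebra k H]
    [AddCommGroup M] [Module k M] [Module H M] [IsScalarTower k H M] [SMulCommClass H k M]
    [AddCommGroup N] [Module k N] [Module H N] [IsScalarTower k H N] [SMulCommClass H k N] :
    H ⊗[k] (M ⊗[k] N) →ₗ[k] M ⊗[k] N :=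
  (TensorProduct.map (actT k H M) (actT k H N)) ∘ₗ
    (TensorProduct.tensorTensorTensorComm k H H M N).toLinearMap ∘ₗ
    (LinearMap.rTensor (M ⊗[k] N) (Coalgebra.comul (R := k)))

/-- Left-hand side of the Yetter-Drinfeld compatibility condition,
`h ⊗ m ↦ h₁ m₍₋₁₎ ⊗ h₂ · m₍₀₎`, relative to an action map `act` and coaction `lam`. -/
def ydLa (k H M : Type) [CommRing k] [Ring H] [HopfAlgebra k H] [AddCommGroup M] [Module k M]
    (act : H ⊗[k] M →ₗ[k] M) (lam : M →ₗ[k] H ⊗[k] M) : H ⊗[k] M →ₗ[k] H ⊗[k] M :=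
  (TensorProduct.map (LinearMap.mul' k H) act) ∘ₗ
    (TensorProduct.tensorTensorTensorComm k H H H M).toLinearMap ∘ₗ
    (TensorProduct.map (Coalgebra.comul (R := k)) lam)

/-- Right-hand side of the Yetter-Drinfeld compatibility condition,
`h ⊗ m ↦ (h₁·m)₍₋₁₎ h₂ ⊗ (h₁·m)₍₀₎`. -/
def ydRa (k H M : Type) [CommRing k] [Ring H] [HopfAlgebra k H] [AddCommGroup M] [Module k M]
    (act : H ⊗[k] M →ₗ[k] M) (lam : M →ₗ[k] H ⊗[k] M) : H ⊗[k] M →ₗ[k] H ⊗[k] M :=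
  (LinearMap.rTensor M ((LinearMap.mul' k H) ∘ₗ (TensorProduct.comm k H H).toLinearMap)) ∘ₗ
    (TensorProduct.assoc k H H M).symm.toLinearMap ∘ₗ
    (LinearMap.lTensor H (lam ∘ₗ act)) ∘ₗ
    (TensorProduct.assoc k H H M).toLinearMap ∘ₗ
    (LinearMap.rTensor M (TensorProduct.comm k H H).toLinearMap) ∘ₗ
    (LinearMap.rTensor M (Coalgebra.comul (R := k)))


section CotensorYD

variable (k H X Y : Type) [Field k] [Ring H] [HopfAlgebra k H]
variable [AddCommGroup X] [Module k X] [Module H X] [IsScalarTower k H X] [SMulCommClass H k X]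
variable [AddCommGroup Y] [Module k Y] [Module H Y] [IsScalarTower k H Y] [SMulCommClass H k Y]
variable {ι : Type} [Fintype ι] (R1 R2 : ι → H)

/-- The coaction `λ(x ⊗ y) = ∑ x₍₋₁₎R² ⊗ (x₍₀₎ ⊗ R¹·y)` on `X ⊗ Y`. -/
def condL (lamX : X →ₗ[k] H ⊗[k] X) : X ⊗[k] Y →ₗ[k] H ⊗[k] (X ⊗[k] Y) :=
  ∑ i, (TensorProduct.map (LinearMap.mulRight k (R2 i))
      (LinearMap.lTensor X (smulL k (R1 i) : Y →ₗ[k] Y))) ∘ₗ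
    (TensorProduct.assoc k H X Y).toLinearMap ∘ₗ (LinearMap.rTensor Y lamX)

/-- The alternative expression `∑ S(R¹)y₍₋₁₎ ⊗ (R²·x ⊗ y₍₀₎)`. -/
def condR (lamY : Y →ₗ[k] H ⊗[k] Y) : X ⊗[k] Y →ₗ[k] H ⊗[k] (X ⊗[k] Y) :=
  ∑ i, (TensorProduct.map (LinearMap.mulLeft k (HopfAlgebra.antipode (R := k) (R1 i)))
      (LinearMap.rTensor Y (smulL k (R2 i) : X →ₗ[k] X))) ∘ₗ
    (TensorProduct.assoc k H X Y).toLinearMap ∘ₗ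
    (LinearMap.rTensor Y (TensorProduct.comm k X H).toLinearMap) ∘ₗ
    (TensorProduct.assoc k X H Y).symm.toLinearMap ∘ₗ (LinearMap.lTensor X lamY)

end CotensorYD

@[simp] lemma smulL_apply {k H M : Type} [CommRing k] [Ring H] [AddCommGroup M] [Module k M]
    [Module H M] [SMulCommClass H k M] (h : H) (m : M) :
    smulL k h m = h • m := rfl

@[simp] lemma actT_tmul {k H M : Type} [CommRing k] [Ring H] [Algebra k H] [AddCommGroup M]
    [Module k M] [Module H M] [IsScalarTower k H M] [SMulCommClass H k M] (h : H) (m : M) :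
    actT k H M (h ⊗ₜ[k] m) = h • m := rfl

section TensorWithAlgebra

variable (k A M N : Type) [CommRing k] [Ring A] [Algebra k A]
variable [AddCommGroup M] [Module k M] [AddCommGroup N] [Module k N]

def rightMul : (A ⊗[k] M) ⊗[k] A →ₗ[k] A ⊗[k] M :=
  LinearMap.rTensor M (LinearMap.mul' k A) ∘ₗ (TensorProduct.rightComm k A M A).toLinearMap

def tensorCombine : (A ⊗[k] M) ⊗[k] (A ⊗[k] N) →ₗ[k] A ⊗[k] (M ⊗[k] N) :=
  TensorProduct.map (LinearMap.mul' k A) LinearMap.id ∘ₗ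
    (TensorProduct.tensorTensorTensorComm k A M A N).toLinearMap

variable {k A M N}

@[simp] lemma rightMul_tmul (a : A) (m : M) (b : A) :
    rightMul k A M ((a ⊗ₜ[k] m) ⊗ₜ[k] b) = (a * b) ⊗ₜ[k] m := by
  simp [rightMul]

@[simp] lemma tensorCombine_tmul (a : A) (m : M) (b : A) (n : N) :
    tensorCombine k A M N ((a ⊗ₜ[k] m) ⊗ₜ[k] (b ⊗ₜ[k] n)) = (a * b) ⊗ₜ[k] (m ⊗ₜ[k] n) := by
  simp [tensorCombine]

lemma rightMul_rightMul (u : A ⊗[k] M) (a b : A) :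
    rightMul k A M (rightMul k A M (u ⊗ₜ[k] a) ⊗ₜ[k] b) = rightMul k A M (u ⊗ₜ[k] (a * b)) := by
  induction u using TensorProduct.induction_on with
  | zero => simp
  | tmul c m => simp [mul_assoc]
  | add u v hu hv => simp only [add_tmul, map_add, hu, hv]

lemma rightMul_algebraMap (u : A ⊗[k] M) (r : k) :
    rightMul k A M (u ⊗ₜ[k] algebraMap k A r) = r • u := by
  induction u using TensorProduct.induction_on with
  | zero => simp
  | tmul c m => simp [Algebra.algebraMap_eq_smul_one, smul_tmul']
  | add u v hu hv => simp only [add_tmul, map_add, hu, hv, smul_add]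

lemma rightMul_tensorCombine (u : A ⊗[k] M) (v : A ⊗[k] N) (c : A) :
    rightMul k A (M ⊗[k] N) (tensorCombine k A M N (u ⊗ₜ[k] v) ⊗ₜ[k] c)
      = tensorCombine k A M N (u ⊗ₜ[k] rightMul k A N (v ⊗ₜ[k] c)) := by
  induction u using TensorProduct.induction_on with
  | zero => simp
  | add u u' hu hu' => simp only [add_tmul, map_add, hu, hu']
  | tmul a m =>
    induction v using TensorProduct.induction_on with
    | zero => simp
    | add v v' hv hv' => simp only [add_tmul, tmul_add, map_add, hv, hv']
    | tmul b n => simp [mul_assoc]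

end TensorWithAlgebra

section YetterDrinfeld

variable {k H : Type} [CommRing k] [Ring H] [HopfAlgebra k H]
variable {M N : Type} [AddCommGroup M] [Module k M] [AddCommGroup N] [Module k N]

local notation "Δ" => Coalgebra.comul (R := k) (A := H)
local notation "ε" => Coalgebra.counit (R := k) (A := H)
local notation "S" => HopfAlgebra.antipode k (A := H)

def tensorCoaction (lamM : M →ₗ[k] H ⊗[k] M) (lamN : N →ₗ[k] H ⊗[k] N) :
    M ⊗[k] N →ₗ[k] H ⊗[k] (M ⊗[k] N) :=
  tensorCombine k H M N ∘ₗ TensorProduct.map lamM lamN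

@[simp] lemma tensorCoaction_tmul (lamM : M →ₗ[k] H ⊗[k] M) (lamN : N →ₗ[k] H ⊗[k] N)
    (m : M) (n : N) :
    tensorCoaction lamM lamN (m ⊗ₜ[k] n) = tensorCombine k H M N (lamM m ⊗ₜ[k] lamN n) := rfl

/-- For `(e, f) = (R², R¹)` this is the coaction that the R-matrix induces on any `H`-module. -/
def twistCoaction [Module H M] [SMulCommClass H k M] {ι : Type} [Fintype ι] (e f : ι → H) :
    M →ₗ[k] H ⊗[k] M :=
  ∑ i, TensorProduct.mk k H M (e i) ∘ₗ smulL k (f i)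

@[simp] lemma twistCoaction_apply [Module H M] [SMulCommClass H k M] {ι : Type} [Fintype ι]
    (e f : ι → H) (m : M) :
    twistCoaction (k := k) e f m = ∑ i, e i ⊗ₜ[k] (f i • m) := by
  simp [twistCoaction]

structure IsComodule (lam : M →ₗ[k] H ⊗[k] M) : Prop where
  counit : ∀ m, TensorProduct.lid k M (LinearMap.rTensor M ε (lam m)) = m
  coassoc : LinearMap.rTensor M Δ ∘ₗ lam
    = (TensorProduct.assoc k H H M).symm.toLinearMap ∘ₗ LinearMap.lTensor H lam ∘ₗ lam

lemma ydLa_tmul (act : H ⊗[k] M →ₗ[k] M) (lam : M →ₗ[k] H ⊗[k] M) (g : H) (m : M) :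
    ydLa k H M act lam (g ⊗ₜ[k] m)
      = TensorProduct.map (LinearMap.mul' k H) act
          (TensorProduct.tensorTensorTensorComm k H H H M (Δ g ⊗ₜ[k] lam m)) := by
  simp [ydLa]

lemma ydRa_tmul (act : H ⊗[k] M →ₗ[k] M) (lam : M →ₗ[k] H ⊗[k] M) (g : H) (m : M) :
    ydRa k H M act lam (g ⊗ₜ[k] m)
      = rightMul k H M
          (LinearMap.rTensor H (lam ∘ₗ act ∘ₗ (TensorProduct.mk k H M).flip m) (Δ g)) := by
  simp only [ydRa, LinearMap.comp_apply, LinearMap.rTensor_tmul]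
  induction Δ g using TensorProduct.induction_on with
  | zero => simp
  | tmul a b =>
    simp only [LinearEquiv.coe_coe, LinearMap.rTensor_tmul, TensorProduct.comm_tmul,
      TensorProduct.assoc_tmul, LinearMap.lTensor_tmul, LinearMap.comp_apply,
      LinearMap.flip_apply, TensorProduct.mk_apply]
    induction lam (act (a ⊗ₜ[k] m)) using TensorProduct.induction_on with
    | zero => simp
    | tmul c m' => simp
    | add u v hu hv => simp only [tmul_add, add_tmul, map_add, hu, hv]
  | add u v hu hv => simp only [add_tmul, map_add, hu, hv]

/-- `λ(h • m) = h₁m₍₋₁₎S(h₃) ⊗ h₂m₍₀₎`: by the Yetter–Drinfeld condition the right-hand side is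
`(h₁m)₍₋₁₎h₂S(h₃) ⊗ (h₁m)₍₀₎ = (h₁m)₍₋₁₎ε(h₂) ⊗ (h₁m)₍₀₎`. -/
lemma coaction_act_eq (act : H ⊗[k] M →ₗ[k] M) (lam : M →ₗ[k] H ⊗[k] M) (m : M)
    (hyd : ∀ g, ydLa k H M act lam (g ⊗ₜ[k] m) = ydRa k H M act lam (g ⊗ₜ[k] m)) (h : H) :
    lam (act (h ⊗ₜ[k] m))
      = rightMul k H M (TensorProduct.map (ydLa k H M act lam ∘ₗ (TensorProduct.mk k H M).flip m)
          S (Δ h)) := by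
  set F := lam ∘ₗ act ∘ₗ (TensorProduct.mk k H M).flip m
  have hF : ydLa k H M act lam ∘ₗ (TensorProduct.mk k H M).flip m
      = rightMul k H M ∘ₗ LinearMap.rTensor H F ∘ₗ Δ :=
    LinearMap.ext fun g => (hyd g).trans (ydRa_tmul act lam g m)
  have hcomb : rightMul k H M ∘ₗ TensorProduct.map (rightMul k H M ∘ₗ LinearMap.rTensor H F) S
      = rightMul k H M ∘ₗ LinearMap.rTensor H F ∘ₗ
          LinearMap.lTensor H (LinearMap.mul' k H ∘ₗ LinearMap.lTensor H S) ∘ₗ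
          (TensorProduct.assoc k H H H).toLinearMap := by
    ext a b c
    simp [rightMul_rightMul]
  have hcounit : rightMul k H M ∘ₗ LinearMap.rTensor H F ∘ₗ
      LinearMap.lTensor H (Algebra.linearMap k H ∘ₗ ε) = F ∘ₗ (TensorProduct.rid k H).toLinearMap ∘ₗ
        LinearMap.lTensor H ε := by
    ext a b
    simp [rightMul_algebraMap]
  calc lam (act (h ⊗ₜ[k] m)) = F h := rfl
    _ = (F ∘ₗ (TensorProduct.rid k H).toLinearMap ∘ₗ LinearMap.lTensor H ε) (Δ h) := by simp
    _ = (rightMul k H M ∘ₗ LinearMap.rTensor H F ∘ₗ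
          LinearMap.lTensor H (LinearMap.mul' k H ∘ₗ LinearMap.lTensor H S))
          (LinearMap.lTensor H Δ (Δ h)) := by
      rw [← hcounit, ← HopfAlgebra.mul_antipode_lTensor_comul]
      simp only [LinearMap.comp_apply, LinearMap.lTensor_comp_apply]
    _ = (rightMul k H M ∘ₗ TensorProduct.map (rightMul k H M ∘ₗ LinearMap.rTensor H F) S)
          (LinearMap.rTensor H Δ (Δ h)) := by
      rw [hcomb]
      simp only [LinearMap.comp_apply, LinearEquiv.coe_coe, Coalgebra.coassoc_apply]
    _ = _ := by
      rw [hF]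
      simp only [LinearMap.comp_apply, LinearMap.map_rTensor, LinearMap.comp_assoc]

lemma coaction_act_eq_of_eq (act : H ⊗[k] M →ₗ[k] M) {lam₁ lam₂ : M →ₗ[k] H ⊗[k] M}
    (hyd₁ : ydLa k H M act lam₁ = ydRa k H M act lam₁)
    (hyd₂ : ydLa k H M act lam₂ = ydRa k H M act lam₂) {m : M} (hm : lam₁ m = lam₂ m) (h : H) :
    lam₁ (act (h ⊗ₜ[k] m)) = lam₂ (act (h ⊗ₜ[k] m)) := by
  rw [coaction_act_eq act lam₁ m (fun g => LinearMap.congr_fun hyd₁ _),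
    coaction_act_eq act lam₂ m (fun g => LinearMap.congr_fun hyd₂ _)]
  congr 3
  ext g
  simp only [LinearMap.comp_apply, LinearMap.flip_apply, TensorProduct.mk_apply, ydLa_tmul, hm]

section Twist

variable [Module H M] [IsScalarTower k H M] [SMulCommClass H k M] {ι : Type} [Fintype ι]

lemma ydLa_twistCoaction (e f : ι → H) (g : H) (m : M) :
    ydLa k H M (actT k H M) (twistCoaction e f) (g ⊗ₜ[k] m)
      = LinearMap.lTensor H (actT k H M ∘ₗ (TensorProduct.mk k H M).flip m)
          (Δ g * ∑ i, e i ⊗ₜ[k] f i) := by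
  rw [ydLa_tmul]
  induction Δ g using TensorProduct.induction_on with
  | zero => simp
  | tmul a b => simp [tmul_sum, Finset.mul_sum, mul_smul]
  | add u v hu hv => simp only [add_tmul, add_mul, map_add, hu, hv]

lemma ydRa_twistCoaction (e f : ι → H) (g : H) (m : M) :
    ydRa k H M (actT k H M) (twistCoaction e f) (g ⊗ₜ[k] m)
      = LinearMap.lTensor H (actT k H M ∘ₗ (TensorProduct.mk k H M).flip m)
          ((∑ i, e i ⊗ₜ[k] f i) * TensorProduct.comm k H H (Δ g)) := by
  rw [ydRa_tmul]
  induction Δ g using TensorProduct.induction_on with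
  | zero => simp
  | tmul a b => simp [sum_tmul, Finset.sum_mul, mul_smul]
  | add u v hu hv => simp only [mul_add, map_add, hu, hv]

lemma twistCoaction_yd {e f : ι → H}
    (hef : ∀ h : H, Δ h * ∑ i, e i ⊗ₜ[k] f i
      = (∑ i, e i ⊗ₜ[k] f i) * TensorProduct.comm k H H (Δ h)) :
    ydLa k H M (actT k H M) (twistCoaction e f) = ydRa k H M (actT k H M) (twistCoaction e f) := by
  ext g m
  simp only [TensorProduct.AlgebraTensorModule.curry_apply, LinearMap.restrictScalars_self,
    TensorProduct.curry_apply, ydLa_twistCoaction, ydRa_twistCoaction, hef]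

lemma isComodule_twistCoaction {e f : ι → H} (hε : ∑ i, ε (e i) • f i = 1)
    (hΔ : ∑ i, Δ (e i) ⊗ₜ[k] f i = ∑ i, ∑ j, (e i ⊗ₜ[k] e j) ⊗ₜ[k] (f j * f i)) :
    IsComodule (twistCoaction (k := k) (M := M) e f) where
  counit m := by
    simp [← Finset.sum_smul, ← smul_assoc, hε]
  coassoc := by
    ext m
    simpa [tmul_sum, mul_smul] using
      congrArg (LinearMap.lTensor (H ⊗[k] H) (actT k H M ∘ₗ (TensorProduct.mk k H M).flip m)) hΔ

end Twist

section Tensor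

variable {lamM : M →ₗ[k] H ⊗[k] M} {lamN : N →ₗ[k] H ⊗[k] N}

lemma rTensor_comul_tensorCombine (u : H ⊗[k] M) (v : H ⊗[k] N) :
    LinearMap.rTensor (M ⊗[k] N) Δ (tensorCombine k H M N (u ⊗ₜ[k] v))
      = tensorCombine k (H ⊗[k] H) M N (LinearMap.rTensor M Δ u ⊗ₜ[k] LinearMap.rTensor N Δ v) := by
  induction u using TensorProduct.induction_on with
  | zero => simp
  | add u u' hu hu' => simp only [add_tmul, map_add, hu, hu']
  | tmul a m =>
    induction v using TensorProduct.induction_on with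
    | zero => simp
    | add v v' hv hv' => simp only [tmul_add, map_add, hv, hv']
    | tmul b n => simp [Bialgebra.comul_mul]

lemma tensorCombine_assoc_symm (a b : H) (s : H ⊗[k] M) (t : H ⊗[k] N) :
    tensorCombine k (H ⊗[k] H) M N
        ((TensorProduct.assoc k H H M).symm (a ⊗ₜ[k] s) ⊗ₜ[k]
          (TensorProduct.assoc k H H N).symm (b ⊗ₜ[k] t))
      = (TensorProduct.assoc k H H (M ⊗[k] N)).symm
          ((a * b) ⊗ₜ[k] tensorCombine k H M N (s ⊗ₜ[k] t)) := by
  induction s using TensorProduct.induction_on with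
  | zero => simp
  | add s s' hs hs' => simp only [add_tmul, tmul_add, map_add, hs, hs']
  | tmul c m =>
    induction t using TensorProduct.induction_on with
    | zero => simp
    | add t t' ht ht' => simp only [tmul_add, map_add, ht, ht']
    | tmul d n => simp

lemma IsComodule.tensorCoaction (hM : IsComodule lamM) (hN : IsComodule lamN) :
    IsComodule (tensorCoaction lamM lamN) where
  counit w := by
    have hε : (TensorProduct.lid k (M ⊗[k] N)).toLinearMap ∘ₗ LinearMap.rTensor (M ⊗[k] N) ε ∘ₗ
          tensorCombine k H M N
        = TensorProduct.map ((TensorProduct.lid k M).toLinearMap ∘ₗ LinearMap.rTensor M ε)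
            ((TensorProduct.lid k N).toLinearMap ∘ₗ LinearMap.rTensor N ε) := by
      ext a m b n
      simp [Bialgebra.counit_mul, mul_smul, smul_tmul', smul_comm (ε a)]
    induction w using TensorProduct.induction_on with
    | zero => simp
    | add w w' hw hw' => simp only [map_add, hw, hw']
    | tmul m n =>
      simpa [hM.counit, hN.counit] using LinearMap.congr_fun hε (lamM m ⊗ₜ[k] lamN n)
  coassoc := by
    ext m n
    have hΔ := rTensor_comul_tensorCombine (lamM m) (lamN n)
    rw [← LinearMap.comp_apply (LinearMap.rTensor M Δ),
      ← LinearMap.comp_apply (LinearMap.rTensor N Δ), hM.coassoc, hN.coassoc] at hΔ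
    simp only [TensorProduct.AlgebraTensorModule.curry_apply, LinearMap.restrictScalars_self,
      TensorProduct.curry_apply, LinearMap.comp_apply, tensorCoaction_tmul, hΔ, LinearEquiv.coe_coe]
    generalize lamM m = s; generalize lamN n = t
    induction s using TensorProduct.induction_on with
    | zero => simp
    | add s s' hs hs' => simp only [add_tmul, map_add, hs, hs']
    | tmul a m =>
      induction t using TensorProduct.induction_on with
      | zero => simp
      | add t t' ht ht' => simp only [tmul_add, map_add, ht, ht']
      | tmul b n => simp [tensorCombine_assoc_symm]

end Tensor

section TensorYD

variable [Module H M] [IsScalarTower k H M] [SMulCommClass H k M]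
variable [Module H N] [IsScalarTower k H N] [SMulCommClass H k N]
variable (lamM : M →ₗ[k] H ⊗[k] M) (lamN : N →ₗ[k] H ⊗[k] N) (m : M) (n : N)

variable (k H M N) in
def tensorCombineAct : (H ⊗[k] M) ⊗[k] (H ⊗[k] (H ⊗[k] N)) →ₗ[k] H ⊗[k] (M ⊗[k] N) :=
  tensorCombine k H M N ∘ₗ LinearMap.lTensor (H ⊗[k] M)
    (LinearMap.lTensor H (actT k H N) ∘ₗ (TensorProduct.leftComm k H H N).toLinearMap)

omit [Module H M] [IsScalarTower k H M] [SMulCommClass H k M] in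
@[simp] lemma tensorCombineAct_tmul (a : H) (x : M) (g b : H) (y : N) :
    tensorCombineAct k H M N ((a ⊗ₜ[k] x) ⊗ₜ[k] (g ⊗ₜ[k] (b ⊗ₜ[k] y)))
      = (a * b) ⊗ₜ[k] (x ⊗ₜ[k] (g • y)) := by
  simp [tensorCombineAct]

omit [Module H M] [IsScalarTower k H M] [SMulCommClass H k M] in
lemma tensorCombineAct_rightMul_tmul (u : H ⊗[k] M) (v : H ⊗[k] N) (b c : H) :
    tensorCombineAct k H M N (rightMul k H M (u ⊗ₜ[k] b) ⊗ₜ[k] (c ⊗ₜ[k] v))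
      = tensorCombine k H M N (u ⊗ₜ[k] TensorProduct.map (LinearMap.mul' k H) (actT k H N)
          (TensorProduct.tensorTensorTensorComm k H H H N ((b ⊗ₜ[k] c) ⊗ₜ[k] v))) := by
  induction u using TensorProduct.induction_on with
  | zero => simp
  | add u u' hu hu' => simp only [add_tmul, map_add, hu, hu']
  | tmul a x =>
    induction v using TensorProduct.induction_on with
    | zero => simp
    | add v v' hv hv' => simp only [tmul_add, map_add, hv, hv']
    | tmul d y => simp [mul_assoc]

lemma ydLa_actD_tmul (lam : M ⊗[k] N →ₗ[k] H ⊗[k] (M ⊗[k] N)) (h : H) (w : M ⊗[k] N) :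
    ydLa k H (M ⊗[k] N) (actD k H M N) lam (h ⊗ₜ[k] w)
      = TensorProduct.map (LinearMap.mul' k H) (TensorProduct.map (actT k H M) (actT k H N) ∘ₗ
          (TensorProduct.tensorTensorTensorComm k H H M N).toLinearMap)
        (TensorProduct.tensorTensorTensorComm k H (H ⊗[k] H) H (M ⊗[k] N)
          (LinearMap.lTensor H Δ (Δ h) ⊗ₜ[k] lam w)) := by
  rw [ydLa_tmul]
  induction Δ h using TensorProduct.induction_on with
  | zero => simp
  | add u v hu hv => simp only [add_tmul, map_add, hu, hv]
  | tmul a b =>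
    induction lam w using TensorProduct.induction_on with
    | zero => simp
    | add w w' hw hw' => simp only [tmul_add, map_add, hw, hw']
    | tmul c x => simp [actD]

/- In Sweedler notation the next three lemmas are
`ydRa (h ⊗ m ⊗ n) = (h₁m)₍₋₁₎ ((h₂n)₍₋₁₎h₃) ⊗ (h₁m)₍₀₎ ⊗ (h₂n)₍₀₎`,
`(h₁m)₍₋₁₎ (h₂n₍₋₁₎) ⊗ (h₁m)₍₀₎ ⊗ h₃n₍₀₎ = ((h₁m)₍₋₁₎h₂) n₍₋₁₎ ⊗ (h₁m)₍₀₎ ⊗ h₃n₍₀₎` and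
`ydLa (h ⊗ m ⊗ n) = (h₁m₍₋₁₎) n₍₋₁₎ ⊗ h₂m₍₀₎ ⊗ h₃n₍₀₎`,
so that the Yetter–Drinfeld conditions of `N` and then of `M` can be inserted between them. -/

lemma ydRa_tensorCoaction_tmul (h : H) :
    ydRa k H (M ⊗[k] N) (actD k H M N) (tensorCoaction lamM lamN) (h ⊗ₜ[k] (m ⊗ₜ[k] n))
      = tensorCombine k H M N (TensorProduct.map
          (lamM ∘ₗ actT k H M ∘ₗ (TensorProduct.mk k H M).flip m)
          (ydRa k H N (actT k H N) lamN ∘ₗ (TensorProduct.mk k H N).flip n) (Δ h)) := by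
  set FM := lamM ∘ₗ actT k H M ∘ₗ (TensorProduct.mk k H M).flip m
  set FN := lamN ∘ₗ actT k H N ∘ₗ (TensorProduct.mk k H N).flip n
  have hact : tensorCoaction lamM lamN ∘ₗ actD k H M N ∘ₗ
      (TensorProduct.mk k H (M ⊗[k] N)).flip (m ⊗ₜ[k] n) = tensorCombine k H M N ∘ₗ
        TensorProduct.map FM FN ∘ₗ Δ := by
    ext a
    simp only [LinearMap.comp_apply, LinearMap.flip_apply, TensorProduct.mk_apply, actD,
      LinearEquiv.coe_coe, LinearMap.rTensor_tmul]
    induction Δ a using TensorProduct.induction_on with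
    | zero => simp
    | add u v hu hv => simp only [add_tmul, map_add, hu, hv]
    | tmul b c => simp [FM, FN]
  have hN : ydRa k H N (actT k H N) lamN ∘ₗ (TensorProduct.mk k H N).flip n
      = rightMul k H N ∘ₗ LinearMap.rTensor H FN ∘ₗ Δ :=
    LinearMap.ext fun g => ydRa_tmul _ _ g n
  have hcomb : rightMul k H (M ⊗[k] N) ∘ₗ LinearMap.rTensor H (tensorCombine k H M N ∘ₗ
      TensorProduct.map FM FN) = tensorCombine k H M N ∘ₗ
        TensorProduct.map FM (rightMul k H N ∘ₗ LinearMap.rTensor H FN) ∘ₗ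
          (TensorProduct.assoc k H H H).toLinearMap := by
    ext a b c
    simp [rightMul_tensorCombine]
  calc _ = (rightMul k H (M ⊗[k] N) ∘ₗ LinearMap.rTensor H (tensorCombine k H M N ∘ₗ
          TensorProduct.map FM FN)) (LinearMap.rTensor H Δ (Δ h)) := by
        rw [ydRa_tmul, hact, LinearMap.comp_apply, ← LinearMap.rTensor_comp_apply,
          LinearMap.comp_assoc]
    _ = _ := by
      rw [hcomb, hN]
      simp [Coalgebra.coassoc_apply, LinearMap.comp_assoc]

lemma tensorCombine_map_ydLa (h : H) :
    tensorCombine k H M N (TensorProduct.map (lamM ∘ₗ actT k H M ∘ₗ (TensorProduct.mk k H M).flip m)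
        (ydLa k H N (actT k H N) lamN ∘ₗ (TensorProduct.mk k H N).flip n) (Δ h))
      = tensorCombineAct k H M N (TensorProduct.map
          (ydRa k H M (actT k H M) lamM ∘ₗ (TensorProduct.mk k H M).flip m)
          ((TensorProduct.mk k H (H ⊗[k] N)).flip (lamN n)) (Δ h)) := by
  set FM := lamM ∘ₗ actT k H M ∘ₗ (TensorProduct.mk k H M).flip m
  set GN := TensorProduct.map (LinearMap.mul' k H) (actT k H N) ∘ₗ
    (TensorProduct.tensorTensorTensorComm k H H H N).toLinearMap ∘ₗ
      (TensorProduct.mk k (H ⊗[k] H) (H ⊗[k] N)).flip (lamN n)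
  have hN : ydLa k H N (actT k H N) lamN ∘ₗ (TensorProduct.mk k H N).flip n = GN ∘ₗ Δ :=
    LinearMap.ext fun g => ydLa_tmul _ _ g n
  have hM : ydRa k H M (actT k H M) lamM ∘ₗ (TensorProduct.mk k H M).flip m
      = rightMul k H M ∘ₗ LinearMap.rTensor H FM ∘ₗ Δ :=
    LinearMap.ext fun g => ydRa_tmul _ _ g m
  have hcomb : tensorCombineAct k H M N ∘ₗ
      TensorProduct.map (rightMul k H M ∘ₗ LinearMap.rTensor H FM)
        ((TensorProduct.mk k H (H ⊗[k] N)).flip (lamN n))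
      = tensorCombine k H M N ∘ₗ TensorProduct.map FM GN ∘ₗ
          (TensorProduct.assoc k H H H).toLinearMap := by
    ext a b c
    exact tensorCombineAct_rightMul_tmul _ _ _ _
  calc _ = (tensorCombine k H M N ∘ₗ TensorProduct.map FM GN) (LinearMap.lTensor H Δ (Δ h)) := by
        rw [hN, LinearMap.comp_apply, ← LinearMap.map_comp_lTensor]; rfl
    _ = (tensorCombine k H M N ∘ₗ TensorProduct.map FM GN ∘ₗ
          (TensorProduct.assoc k H H H).toLinearMap) (LinearMap.rTensor H Δ (Δ h)) := by
      simp [Coalgebra.coassoc_apply]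
    _ = _ := by
      rw [← hcomb, hM]
      simp [LinearMap.comp_assoc]

lemma ydLa_tensorCoaction_tmul (h : H) :
    ydLa k H (M ⊗[k] N) (actD k H M N) (tensorCoaction lamM lamN) (h ⊗ₜ[k] (m ⊗ₜ[k] n))
      = tensorCombineAct k H M N (TensorProduct.map
          (ydLa k H M (actT k H M) lamM ∘ₗ (TensorProduct.mk k H M).flip m)
          ((TensorProduct.mk k H (H ⊗[k] N)).flip (lamN n)) (Δ h)) := by
  set GM := TensorProduct.map (LinearMap.mul' k H) (actT k H M) ∘ₗ
    (TensorProduct.tensorTensorTensorComm k H H H M).toLinearMap ∘ₗ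
      (TensorProduct.mk k (H ⊗[k] H) (H ⊗[k] M)).flip (lamM m)
  set K := TensorProduct.map (LinearMap.mul' k H)
      (TensorProduct.map (actT k H M) (actT k H N) ∘ₗ
        (TensorProduct.tensorTensorTensorComm k H H M N).toLinearMap) ∘ₗ
    (TensorProduct.tensorTensorTensorComm k H (H ⊗[k] H) H (M ⊗[k] N)).toLinearMap
  have hM : ydLa k H M (actT k H M) lamM ∘ₗ (TensorProduct.mk k H M).flip m = GM ∘ₗ Δ :=
    LinearMap.ext fun g => ydLa_tmul _ _ g m
  have hcomb : tensorCombineAct k H M N ∘ₗ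
      TensorProduct.map GM ((TensorProduct.mk k H (H ⊗[k] N)).flip (lamN n))
      = K ∘ₗ (TensorProduct.mk k _ _).flip (tensorCoaction lamM lamN (m ⊗ₜ[k] n)) ∘ₗ
          (TensorProduct.assoc k H H H).toLinearMap := by
    ext a b c
    simp only [TensorProduct.AlgebraTensorModule.curry_apply, LinearMap.restrictScalars_self,
      TensorProduct.curry_apply, LinearMap.comp_apply, TensorProduct.map_tmul,
      LinearEquiv.coe_coe, TensorProduct.assoc_tmul, LinearMap.flip_apply, TensorProduct.mk_apply,
      GM, K, tensorCoaction_tmul]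
    generalize lamM m = u; generalize lamN n = v
    induction u using TensorProduct.induction_on with
    | zero => simp
    | add u u' hu hu' => simp only [add_tmul, tmul_add, map_add, hu, hu']
    | tmul a' x =>
      induction v using TensorProduct.induction_on with
      | zero => simp
      | add v v' hv hv' => simp only [tmul_add, map_add, hv, hv']
      | tmul b' y => simp [mul_assoc]
  calc _ = (K ∘ₗ (TensorProduct.mk k _ _).flip (tensorCoaction lamM lamN (m ⊗ₜ[k] n)) ∘ₗ
          (TensorProduct.assoc k H H H).toLinearMap) (LinearMap.rTensor H Δ (Δ h)) := by
        simp [K, ydLa_actD_tmul, Coalgebra.coassoc_apply]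
    _ = _ := by
      rw [← hcomb, hM]
      simp

variable {lamM lamN} in
lemma tensorCoaction_yd (hM : ydLa k H M (actT k H M) lamM = ydRa k H M (actT k H M) lamM)
    (hN : ydLa k H N (actT k H N) lamN = ydRa k H N (actT k H N) lamN) :
    ydLa k H (M ⊗[k] N) (actD k H M N) (tensorCoaction lamM lamN)
      = ydRa k H (M ⊗[k] N) (actD k H M N) (tensorCoaction lamM lamN) := by
  ext h m n
  simp only [TensorProduct.AlgebraTensorModule.curry_apply, LinearMap.restrictScalars_self,
    TensorProduct.curry_apply]
  rw [ydLa_tensorCoaction_tmul, hM, ← tensorCombine_map_ydLa, hN, ydRa_tensorCoaction_tmul]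

end TensorYD

section Quasitriangular

variable {ι : Type} [Fintype ι] {R1 R2 : ι → H}

lemma QT.sum_sum_tmul_eq_one_of_comp_comul (hqt : QT k H R1 R2) (φ : H ⊗[k] H →ₗ[k] H)
    (hφ : ∀ a, φ (Δ a) = algebraMap k H (ε a)) :
    ∑ i, ∑ j, φ (R1 i ⊗ₜ[k] R1 j) ⊗ₜ[k] (R2 i * R2 j) = 1 := by
  have h2 := congrArg (TensorProduct.map φ LinearMap.id) hqt.qt2
  simp only [map_sum, TensorProduct.map_tmul, hφ, LinearMap.id_coe, id_eq,
    Algebra.algebraMap_eq_smul_one, smul_tmul, ← tmul_sum, hqt.qt1a] at h2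
  exact h2.symm

lemma QT.mul_inv (hqt : QT k H R1 R2) :
    (∑ i, R1 i ⊗ₜ[k] R2 i) * (∑ i, S (R1 i) ⊗ₜ[k] R2 i) = 1 := by
  simpa [Finset.sum_mul_sum] using
    hqt.sum_sum_tmul_eq_one_of_comp_comul (LinearMap.mul' k H ∘ₗ LinearMap.lTensor H S)
      HopfAlgebra.mul_antipode_lTensor_comul_apply

lemma QT.inv_mul (hqt : QT k H R1 R2) :
    (∑ i, S (R1 i) ⊗ₜ[k] R2 i) * (∑ i, R1 i ⊗ₜ[k] R2 i) = 1 := by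
  simpa [Finset.sum_mul_sum] using
    hqt.sum_sum_tmul_eq_one_of_comp_comul (LinearMap.mul' k H ∘ₗ LinearMap.rTensor H S)
      HopfAlgebra.mul_antipode_rTensor_comul_apply

lemma QT.comul_mul_inv (hqt : QT k H R1 R2) (h : H) :
    Δ h * ∑ i, S (R1 i) ⊗ₜ[k] R2 i
      = (∑ i, S (R1 i) ⊗ₜ[k] R2 i) * TensorProduct.comm k H H (Δ h) := by
  set R := ∑ i, R1 i ⊗ₜ[k] R2 i
  set Rinv := ∑ i, S (R1 i) ⊗ₜ[k] R2 i
  calc Δ h * Rinv = Rinv * (R * Δ h) * Rinv := by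
        rw [← mul_assoc Rinv, hqt.inv_mul, one_mul]
    _ = Rinv * TensorProduct.comm k H H (Δ h) := by
        rw [hqt.qt4, mul_assoc, mul_assoc, hqt.mul_inv, mul_one]

lemma QT.comul_mul_flip (hqt : QT k H R1 R2) (h : H) :
    Δ h * ∑ i, R2 i ⊗ₜ[k] R1 i = (∑ i, R2 i ⊗ₜ[k] R1 i) * TensorProduct.comm k H H (Δ h) := by
  have h4 := congrArg (Algebra.TensorProduct.comm k H H) (hqt.qt4 h)
  simp only [map_mul, map_sum, Algebra.TensorProduct.comm_tmul] at h4
  exact (TensorProduct.comm_comm k H H (Δ h) ▸ h4).symm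

lemma QT.coassoc_flip (hqt : QT k H R1 R2) :
    ∑ i, Δ (R2 i) ⊗ₜ[k] R1 i = ∑ i, ∑ j, (R2 i ⊗ₜ[k] R2 j) ⊗ₜ[k] (R1 j * R1 i) := by
  have h3 := congrArg (TensorProduct.comm k H (H ⊗[k] H)) hqt.qt3
  simp only [map_sum, TensorProduct.comm_tmul] at h3
  rw [h3, Finset.sum_comm]

end Quasitriangular

end YetterDrinfeld

section Cotensor

variable {k H X Y : Type} [Field k] [Ring H] [HopfAlgebra k H]
variable [AddCommGroup X] [Module k X] [AddCommGroup Y] [Module k Y]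
variable {ι : Type} [Fintype ι] (R1 R2 : ι → H)

lemma condL_eq_tensorCoaction [Module H Y] [SMulCommClass H k Y] (lamX : X →ₗ[k] H ⊗[k] X) :
    condL k H X Y R1 R2 lamX = tensorCoaction lamX (twistCoaction R2 R1) := by
  ext x y
  simp only [TensorProduct.AlgebraTensorModule.curry_apply, LinearMap.restrictScalars_self,
    TensorProduct.curry_apply, condL, LinearMap.sum_apply, LinearMap.comp_apply,
    LinearMap.rTensor_tmul, tensorCoaction_tmul, twistCoaction_apply, tmul_sum, map_sum]
  refine Finset.sum_congr rfl fun i _ => ?_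
  induction lamX x using TensorProduct.induction_on with
  | zero => simp
  | add u v hu hv => simp only [add_tmul, map_add, hu, hv]
  | tmul a x' => simp

lemma condR_eq_tensorCoaction [Module H X] [SMulCommClass H k X] (lamY : Y →ₗ[k] H ⊗[k] Y) :
    condR k H X Y R1 R2 lamY
      = tensorCoaction (twistCoaction (fun i => HopfAlgebra.antipode k (R1 i)) R2) lamY := by
  ext x y
  simp only [TensorProduct.AlgebraTensorModule.curry_apply, LinearMap.restrictScalars_self,
    TensorProduct.curry_apply, condR, LinearMap.sum_apply, LinearMap.comp_apply,
    LinearMap.lTensor_tmul, tensorCoaction_tmul, twistCoaction_apply, sum_tmul, map_sum]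
  refine Finset.sum_congr rfl fun i _ => ?_
  induction lamY y using TensorProduct.induction_on with
  | zero => simp
  | add u v hu hv => simp only [tmul_add, map_add, hu, hv]
  | tmul b y' => simp

end Cotensor

section CotensorYD

variable (k H X Y : Type) [Field k] [Ring H] [HopfAlgebra k H]
variable [AddCommGroup X] [Module k X] [Module H X] [IsScalarTower k H X] [SMulCommClass H k X]
variable [AddCommGroup Y] [Module k Y] [Module H Y] [IsScalarTower k H Y] [SMulCommClass H k Y]
variable {ι : Type} [Fintype ι] (R1 R2 : ι → H)

theorem cotensor_yetterDrinfeld (hqt : QT k H R1 R2)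
    (lamX : X →ₗ[k] H ⊗[k] X) (lamY : Y →ₗ[k] H ⊗[k] Y)
    (hXcounit : ∀ x : X, (TensorProduct.lid k X)
        ((LinearMap.rTensor X (Coalgebra.counit (R := k))) (lamX x)) = x)
    (hXcoassoc : (LinearMap.rTensor X (Coalgebra.comul (R := k))) ∘ₗ lamX
        = (TensorProduct.assoc k H H X).symm.toLinearMap ∘ₗ
          (LinearMap.lTensor H lamX) ∘ₗ lamX)
    (hXyd : ydLa k H X (actT k H X) lamX = ydRa k H X (actT k H X) lamX)
    (hYyd : ydLa k H Y (actT k H Y) lamY = ydRa k H Y (actT k H Y) lamY)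
    (w : X ⊗[k] Y)
    (hw : condL k H X Y R1 R2 lamX w = condR k H X Y R1 R2 lamY w) :
    -- the diagonal action preserves the cotensor product
    (∀ h : H, condL k H X Y R1 R2 lamX (actD k H X Y (h ⊗ₜ[k] w))
        = condR k H X Y R1 R2 lamY (actD k H X Y (h ⊗ₜ[k] w))) ∧
    -- counit law for λ
    ((TensorProduct.lid k (X ⊗[k] Y))
        ((LinearMap.rTensor (X ⊗[k] Y) (Coalgebra.counit (R := k)))
          (condL k H X Y R1 R2 lamX w)) = w) ∧
    -- coassociativity of λ
    ((LinearMap.rTensor (X ⊗[k] Y) (Coalgebra.comul (R := k)))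
        (condL k H X Y R1 R2 lamX w)
      = (TensorProduct.assoc k H H (X ⊗[k] Y)).symm
          ((LinearMap.lTensor H (condL k H X Y R1 R2 lamX))
            (condL k H X Y R1 R2 lamX w))) ∧
    -- Yetter–Drinfeld compatibility on the cotensor product
    (∀ h : H, ydLa k H (X ⊗[k] Y) (actD k H X Y) (condL k H X Y R1 R2 lamX) (h ⊗ₜ[k] w)
        = ydRa k H (X ⊗[k] Y) (actD k H X Y) (condL k H X Y R1 R2 lamX) (h ⊗ₜ[k] w)) := by
  have ydL : ydLa k H (X ⊗[k] Y) (actD k H X Y) (condL k H X Y R1 R2 lamX)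
      = ydRa k H (X ⊗[k] Y) (actD k H X Y) (condL k H X Y R1 R2 lamX) := by
    rw [condL_eq_tensorCoaction]
    exact tensorCoaction_yd hXyd (twistCoaction_yd hqt.comul_mul_flip)
  have ydR : ydLa k H (X ⊗[k] Y) (actD k H X Y) (condR k H X Y R1 R2 lamY)
      = ydRa k H (X ⊗[k] Y) (actD k H X Y) (condR k H X Y R1 R2 lamY) := by
    rw [condR_eq_tensorCoaction]
    exact tensorCoaction_yd (twistCoaction_yd hqt.comul_mul_inv) hYyd
  have comod : IsComodule (condL k H X Y R1 R2 lamX) := by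
    rw [condL_eq_tensorCoaction]
    exact IsComodule.tensorCoaction ⟨hXcounit, hXcoassoc⟩
      (isComodule_twistCoaction hqt.qt1b hqt.coassoc_flip)
  exact ⟨fun h => coaction_act_eq_of_eq (actD k H X Y) ydL ydR hw h, comod.counit w,
    LinearMap.congr_fun comod.coassoc w, fun h => LinearMap.congr_fun ydL (h ⊗ₜ[k] w)⟩

end CotensorYD

end
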